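/- (Finite update sequences never increase the loss.) Assume λ > 0. Let (A_0^(1),…,A_0^(N)), (A_1^(1),…,A_1^(N)), …, (A_T^(1),…,A_T^(N)) be a finite sequence of tuples of factor matrices such that for each step t, the tuple at step t+1 is obtained from the tuple at step t by replacing the i_n-th row of one factor matrix A_t^(n) (for some mode n and some row index i_n) with the optimal row a* = (B^{(n)}_{i_n} + λ I_{J_n})^{-1} c^{(n)}_{i_n} computed from the step-t quantities, all other entries unchanged. Then L(G, A_T^(1),…,A_T^(N)) ≤ L(G, A_0^(1),…,A_0^(N)). -/

import Mathlib

open Finset Matrix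

/-- The Tucker loss (Equation (7)):
`L(G, A⁽¹⁾,…,A⁽ᴺ⁾) = ∑_{i∈Ω} (X_i − ∑_j G_j ∏_n A⁽ⁿ⁾_{iₙ jₙ})² + λ ∑_n ‖A⁽ⁿ⁾‖_F²`. -/
noncomputable def tuckerLoss {N : ℕ} (I J : Fin N → ℕ)
    (Ω : Finset ((k : Fin N) → Fin (I k)))
    (X : ((k : Fin N) → Fin (I k)) → ℝ)
    (G : ((k : Fin N) → Fin (J k)) → ℝ)
    (A : (n : Fin N) → Matrix (Fin (I n)) (Fin (J n)) ℝ)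
    (lam : ℝ) : ℝ :=
  (∑ i ∈ Ω,
      (X i - ∑ j : (k : Fin N) → Fin (J k), G j * ∏ n, A n (i n) (j n)) ^ 2)
    + lam * ∑ n, ∑ p, ∑ q, A n p q ^ 2

/-- The vector `δ⁽ⁿ⁾_i ∈ ℝ^{Jₙ}` (Equation (10)):
`δ⁽ⁿ⁾_i(j) = ∑_{j' : j'ₙ = j} G_{j'} ∏_{k≠n} A⁽ᵏ⁾_{iₖ j'ₖ}`. -/
noncomputable def deltaVec {N : ℕ} (I J : Fin N → ℕ)
    (G : ((k : Fin N) → Fin (J k)) → ℝ)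
    (A : (n : Fin N) → Matrix (Fin (I n)) (Fin (J n)) ℝ)
    (n : Fin N) (i : (k : Fin N) → Fin (I k)) : Fin (J n) → ℝ :=
  fun j =>
    ∑ j' ∈ Finset.univ.filter (fun j' : (k : Fin N) → Fin (J k) => j' n = j),
      G j' * ∏ k ∈ Finset.univ.erase n, A k (i k) (j' k)

/-- The matrix `B⁽ⁿ⁾_{iₙ} ∈ ℝ^{Jₙ×Jₙ}` (Equation (8)), whose `(j₁,j₂)` entry is
`∑_{i ∈ Ω⁽ⁿ⁾_{iₙ}} δ⁽ⁿ⁾_i(j₁) δ⁽ⁿ⁾_i(j₂)`. -/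
noncomputable def Bmat {N : ℕ} (I J : Fin N → ℕ)
    (Ω : Finset ((k : Fin N) → Fin (I k)))
    (G : ((k : Fin N) → Fin (J k)) → ℝ)
    (A : (n : Fin N) → Matrix (Fin (I n)) (Fin (J n)) ℝ)
    (n : Fin N) (r : Fin (I n)) : Matrix (Fin (J n)) (Fin (J n)) ℝ :=
  fun j1 j2 =>
    ∑ i ∈ Ω.filter (fun i => i n = r),
      deltaVec I J G A n i j1 * deltaVec I J G A n i j2

/-- The vector `c⁽ⁿ⁾_{iₙ} ∈ ℝ^{Jₙ}` (Equation (9)), whose `j`th entry is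
`∑_{i ∈ Ω⁽ⁿ⁾_{iₙ}} X_i δ⁽ⁿ⁾_i(j)`. -/
noncomputable def cvec {N : ℕ} (I J : Fin N → ℕ)
    (Ω : Finset ((k : Fin N) → Fin (I k)))
    (X : ((k : Fin N) → Fin (I k)) → ℝ)
    (G : ((k : Fin N) → Fin (J k)) → ℝ)
    (A : (n : Fin N) → Matrix (Fin (I n)) (Fin (J n)) ℝ)
    (n : Fin N) (r : Fin (I n)) : Fin (J n) → ℝ :=
  fun j => ∑ i ∈ Ω.filter (fun i => i n = r), X i * deltaVec I J G A n i j

/-!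
With everything but row `r` of the `n`-th factor fixed, the Tucker model is linear in that row `a`,
with coefficient vector `δ⁽ⁿ⁾_i` at each observed entry `i`. Hence the loss equals a constant plus
the ridge-regression objective `∑_{i ∈ Ω⁽ⁿ⁾_r} (X_i - ⟨δ⁽ⁿ⁾_i, a⟩)² + λ‖a‖²`, which equals
`∑ X_i² - 2⟨c, a⟩ + aᵀ(B + λI)a`. As `B + λI` is positive definite, `a* = (B + λI)⁻¹c`
solves the normal equations and is the global minimiser, so no update increases the loss.
-/

lemma Matrix.PosSemidef.quadratic_le_of_mulVec_eq {κ : Type*} [Fintype κ] {M : Matrix κ κ ℝ}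
    (hM : M.PosSemidef) {x₀ c : κ → ℝ} (hx₀ : M *ᵥ x₀ = c) (x : κ → ℝ) :
    x₀ ⬝ᵥ M *ᵥ x₀ - 2 * (c ⬝ᵥ x₀) ≤ x ⬝ᵥ M *ᵥ x - 2 * (c ⬝ᵥ x) := by
  have hsymm : ∀ u v : κ → ℝ, u ⬝ᵥ M *ᵥ v = v ⬝ᵥ M *ᵥ u := fun u v => by
    rw [dotProduct_mulVec, ← mulVec_transpose, dotProduct_comm]
    congr 2
    exact hM.isHermitian
  have hnonneg := hM.dotProduct_mulVec_nonneg (x - x₀)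
  rw [star_trivial, mulVec_sub, dotProduct_sub, sub_dotProduct, sub_dotProduct,
    hsymm x₀ x] at hnonneg
  rw [← hx₀, dotProduct_comm (M *ᵥ x₀), dotProduct_comm (M *ᵥ x₀), hsymm x]
  linarith

section Ridge

variable {m κ : Type*} [Fintype κ] (S : Finset m) (X : m → ℝ) (δ : m → κ → ℝ)

def ridgeGram : Matrix κ κ ℝ := fun j₁ j₂ => ∑ i ∈ S, δ i j₁ * δ i j₂

def ridgeMoment : κ → ℝ := fun j => ∑ i ∈ S, X i * δ i j

def ridgeObjective (lam : ℝ) (a : κ → ℝ) : ℝ :=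
  ∑ i ∈ S, (X i - δ i ⬝ᵥ a) ^ 2 + lam * ∑ q, a q ^ 2

lemma dotProduct_ridgeGram_mulVec (x : κ → ℝ) :
    x ⬝ᵥ ridgeGram S δ *ᵥ x = ∑ i ∈ S, (δ i ⬝ᵥ x) ^ 2 := by
  calc x ⬝ᵥ ridgeGram S δ *ᵥ x
      = ∑ j₁, ∑ j₂, ∑ i ∈ S, (δ i j₁ * x j₁) * (δ i j₂ * x j₂) := by
        simp only [dotProduct, mulVec, ridgeGram, Finset.mul_sum, Finset.sum_mul]
        exact Finset.sum_congr rfl fun j₁ _ => Finset.sum_congr rfl fun j₂ _ =>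
          Finset.sum_congr rfl fun i _ => by ring
    _ = ∑ i ∈ S, ∑ j₁, ∑ j₂, (δ i j₁ * x j₁) * (δ i j₂ * x j₂) :=
        (Finset.sum_congr rfl fun _ _ => Finset.sum_comm).trans Finset.sum_comm
    _ = ∑ i ∈ S, (δ i ⬝ᵥ x) ^ 2 :=
        Finset.sum_congr rfl fun i _ => by rw [sq, dotProduct, Finset.sum_mul_sum]

lemma ridgeMoment_dotProduct (x : κ → ℝ) :
    ridgeMoment S X δ ⬝ᵥ x = ∑ i ∈ S, X i * (δ i ⬝ᵥ x) := by
  simp only [dotProduct, ridgeMoment, Finset.sum_mul, Finset.mul_sum]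
  rw [Finset.sum_comm]
  exact Finset.sum_congr rfl fun i _ => Finset.sum_congr rfl fun j _ => by ring

lemma posSemidef_ridgeGram : (ridgeGram S δ).PosSemidef := by
  refine .of_dotProduct_mulVec_nonneg ?_ fun x => ?_
  · ext j₁ j₂
    simp only [conjTranspose_apply, star_trivial, ridgeGram, mul_comm]
  · rw [star_trivial, dotProduct_ridgeGram_mulVec]
    positivity

lemma posDef_ridgeGram_add_smul_one [DecidableEq κ] {lam : ℝ} (hlam : 0 < lam) :
    (ridgeGram S δ + lam • 1).PosDef :=
  PosDef.posSemidef_add (posSemidef_ridgeGram S δ) (PosDef.one.smul hlam)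

lemma ridgeObjective_eq [DecidableEq κ] (lam : ℝ) (a : κ → ℝ) :
    ridgeObjective S X δ lam a = ∑ i ∈ S, X i ^ 2 - 2 * (ridgeMoment S X δ ⬝ᵥ a)
      + a ⬝ᵥ (ridgeGram S δ + lam • 1) *ᵥ a := by
  have hreg : a ⬝ᵥ (lam • (1 : Matrix κ κ ℝ)) *ᵥ a = lam * ∑ q, a q ^ 2 := by
    rw [smul_mulVec, one_mulVec, dotProduct_smul, smul_eq_mul, dotProduct]
    simp only [sq]
  rw [ridgeObjective, add_mulVec, dotProduct_add, hreg, dotProduct_ridgeGram_mulVec,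
    ridgeMoment_dotProduct]
  have hfit : ∀ i ∈ S, (X i - δ i ⬝ᵥ a) ^ 2
      = X i ^ 2 - 2 * (X i * (δ i ⬝ᵥ a)) + (δ i ⬝ᵥ a) ^ 2 := fun i _ => by ring
  rw [Finset.sum_congr rfl hfit, Finset.sum_add_distrib, Finset.sum_sub_distrib, ← Finset.mul_sum]
  ring

lemma ridgeObjective_inv_mulVec_le [DecidableEq κ] {lam : ℝ} (hlam : 0 < lam) (a : κ → ℝ) :
    ridgeObjective S X δ lam ((ridgeGram S δ + lam • 1)⁻¹ *ᵥ ridgeMoment S X δ)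
      ≤ ridgeObjective S X δ lam a := by
  have hM := posDef_ridgeGram_add_smul_one S δ hlam
  have hsolve : (ridgeGram S δ + lam • 1) *ᵥ ((ridgeGram S δ + lam • 1)⁻¹ *ᵥ ridgeMoment S X δ)
      = ridgeMoment S X δ := by
    rw [mulVec_mulVec, mul_nonsing_inv _ ((isUnit_iff_isUnit_det _).mp hM.isUnit), one_mulVec]
  rw [ridgeObjective_eq, ridgeObjective_eq]
  linarith [hM.posSemidef.quadratic_le_of_mulVec_eq hsolve a]

end Ridge

lemma Fintype.sum_apply_update {ι M : Type*} [Fintype ι] [DecidableEq ι] [AddCommGroup M]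
    {β : ι → Type*} (F : ∀ i, β i → M) (f : ∀ i, β i) (i₀ : ι) (b : β i₀) :
    ∑ i, F i (Function.update f i₀ b i) = ∑ i, F i (f i) + (F i₀ b - F i₀ (f i₀)) := by
  rw [← sub_eq_iff_eq_add', ← Finset.sum_sub_distrib, Finset.sum_eq_single i₀]
  · rw [Function.update_self]
  · intro i _ hi
    rw [Function.update_of_ne hi, sub_self]
  · exact fun h => absurd (Finset.mem_univ i₀) h

section Tucker

variable {N : ℕ} {I J : Fin N → ℕ} (Ω : Finset ((k : Fin N) → Fin (I k)))
  (X : ((k : Fin N) → Fin (I k)) → ℝ) (G : ((k : Fin N) → Fin (J k)) → ℝ)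
  (A : (n : Fin N) → Matrix (Fin (I n)) (Fin (J n)) ℝ)

lemma deltaVec_dotProduct_row (n : Fin N) (i : (k : Fin N) → Fin (I k)) :
    deltaVec I J G A n i ⬝ᵥ A n (i n) = ∑ j, G j * ∏ m, A m (i m) (j m) := by
  symm
  calc ∑ j, G j * ∏ m, A m (i m) (j m)
      = ∑ j, (G j * ∏ k ∈ univ.erase n, A k (i k) (j k)) * A n (i n) (j n) :=
        Finset.sum_congr rfl fun j _ => by rw [← Finset.mul_prod_erase univ _ (mem_univ n)]; ring
    _ = ∑ jn, ∑ j ∈ univ.filter (fun j : (k : Fin N) → Fin (J k) => j n = jn),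
          (G j * ∏ k ∈ univ.erase n, A k (i k) (j k)) * A n (i n) (j n) :=
        (Finset.sum_fiberwise _ _ _).symm
    _ = deltaVec I J G A n i ⬝ᵥ A n (i n) :=
        Finset.sum_congr rfl fun jn _ => by
          rw [deltaVec, Finset.sum_mul]
          exact Finset.sum_congr rfl fun j hj => by rw [(mem_filter.1 hj).2]

lemma deltaVec_update_self (n : Fin N) (M : Matrix (Fin (I n)) (Fin (J n)) ℝ) :
    deltaVec I J G (Function.update A n M) n = deltaVec I J G A n := by
  funext i j
  refine Finset.sum_congr rfl fun j' _ => congrArg (G j' * ·) ?_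
  exact Finset.prod_congr rfl fun k hk => by rw [Function.update_of_ne (ne_of_mem_erase hk)]

lemma sum_sq_sub_update_updateRow (n : Fin N) (r : Fin (I n)) (a : Fin (J n) → ℝ) :
    ∑ i ∈ Ω, (X i - ∑ j, G j * ∏ m, Function.update A n ((A n).updateRow r a) m (i m) (j m)) ^ 2
      = ∑ i ∈ Ω, (X i - ∑ j, G j * ∏ m, A m (i m) (j m)) ^ 2
        + (∑ i ∈ Ω.filter (fun i => i n = r), (X i - deltaVec I J G A n i ⬝ᵥ a) ^ 2
          - ∑ i ∈ Ω.filter (fun i => i n = r), (X i - deltaVec I J G A n i ⬝ᵥ A n r) ^ 2) := by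
  rw [← Finset.sum_sub_distrib, Finset.sum_filter, ← Finset.sum_add_distrib]
  refine Finset.sum_congr rfl fun i _ => ?_
  rw [← deltaVec_dotProduct_row _ _ n i, ← deltaVec_dotProduct_row _ _ n i,
    deltaVec_update_self, Function.update_self]
  split_ifs with h
  · rw [h, updateRow_self]
    ring
  · rw [updateRow_ne h]
    ring

lemma sum_sq_update_updateRow (n : Fin N) (r : Fin (I n)) (a : Fin (J n) → ℝ) :
    ∑ m, ∑ p, ∑ q, Function.update A n ((A n).updateRow r a) m p q ^ 2
      = ∑ m, ∑ p, ∑ q, A m p q ^ 2 + (∑ q, a q ^ 2 - ∑ q, A n r q ^ 2) := by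
  have hrow : ∑ p, ∑ q, (A n).updateRow r a p q ^ 2
      = ∑ p, ∑ q, A n p q ^ 2 + (∑ q, a q ^ 2 - ∑ q, A n r q ^ 2) :=
    Fintype.sum_apply_update (fun _ row => ∑ q, row q ^ 2) (A n) r a
  refine (Fintype.sum_apply_update (fun m (M : Matrix (Fin (I m)) (Fin (J m)) ℝ) =>
    ∑ p, ∑ q, M p q ^ 2) A n _).trans ?_
  rw [hrow]
  ring

lemma tuckerLoss_update_updateRow (lam : ℝ) (n : Fin N) (r : Fin (I n)) (a : Fin (J n) → ℝ) :
    tuckerLoss I J Ω X G (Function.update A n ((A n).updateRow r a)) lam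
      = tuckerLoss I J Ω X G A lam
        + (ridgeObjective (Ω.filter (fun i => i n = r)) X (deltaVec I J G A n) lam a
          - ridgeObjective (Ω.filter (fun i => i n = r)) X (deltaVec I J G A n) lam (A n r)) := by
  rw [tuckerLoss, tuckerLoss, ridgeObjective, ridgeObjective, sum_sq_sub_update_updateRow,
    sum_sq_update_updateRow]
  ring

lemma tuckerLoss_update_optimalRow_le {lam : ℝ} (hlam : 0 < lam) (n : Fin N) (r : Fin (I n)) :
    tuckerLoss I J Ω X G (Function.update A n ((A n).updateRow r
        ((Bmat I J Ω G A n r + lam • (1 : Matrix (Fin (J n)) (Fin (J n)) ℝ))⁻¹ *ᵥ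
          cvec I J Ω X G A n r))) lam
      ≤ tuckerLoss I J Ω X G A lam := by
  -- `Bmat` and `cvec` unfold to `ridgeGram` and `ridgeMoment` of the slice `Ω⁽ⁿ⁾_r`.
  have hopt : ridgeObjective (Ω.filter (fun i => i n = r)) X (deltaVec I J G A n) lam
        ((Bmat I J Ω G A n r + lam • 1)⁻¹ *ᵥ cvec I J Ω X G A n r)
      ≤ ridgeObjective (Ω.filter (fun i => i n = r)) X (deltaVec I J G A n) lam (A n r) :=
    ridgeObjective_inv_mulVec_le _ _ _ hlam _
  rw [tuckerLoss_update_updateRow]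
  linarith

end Tucker

theorem ptucker_update_sequence_monotone_general
    (N : ℕ) (I J : Fin N → ℕ)
    (Ω : Finset ((k : Fin N) → Fin (I k)))
    (X : ((k : Fin N) → Fin (I k)) → ℝ)
    (G : ((k : Fin N) → Fin (J k)) → ℝ)
    (lam : ℝ) (hlam : 0 < lam)
    (T : ℕ) (A : ℕ → (n : Fin N) → Matrix (Fin (I n)) (Fin (J n)) ℝ)
    (hstep : ∀ t < T, ∃ (n : Fin N) (r : Fin (I n)),
      A (t + 1) = Function.update (A t) n ((A t n).updateRow r
        ((Bmat I J Ω G (A t) n r + lam • (1 : Matrix (Fin (J n)) (Fin (J n)) ℝ))⁻¹.mulVec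
          (cvec I J Ω X G (A t) n r)))) :
    tuckerLoss I J Ω X G (A T) lam ≤ tuckerLoss I J Ω X G (A 0) lam := by
  suffices h : ∀ t ≤ T, tuckerLoss I J Ω X G (A t) lam ≤ tuckerLoss I J Ω X G (A 0) lam from
    h T le_rfl
  intro t ht
  induction t with
  | zero => exact le_rfl
  | succ t ih =>
    obtain ⟨n, r, hA⟩ := hstep t ht
    rw [hA]
    exact (tuckerLoss_update_optimalRow_le Ω X G (A t) hlam n r).trans (ih (Nat.le_of_succ_le ht))

/-- Finite update sequences never increase the loss: if each step of a
finite sequence of factor-matrix tuples replaces one row of one factor matrix with the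
optimal row `a* = (B⁽ⁿ⁾_r + λ I)⁻¹ c⁽ⁿ⁾_r` computed from the current quantities, then the
final Tucker loss is at most the initial one. -/
theorem ptucker_update_sequence_monotone
    (N : ℕ) (hN : 0 < N) (I J : Fin N → ℕ) (hI : ∀ k, 0 < I k) (hJ : ∀ k, 0 < J k)
    (Ω : Finset ((k : Fin N) → Fin (I k)))
    (X : ((k : Fin N) → Fin (I k)) → ℝ)
    (G : ((k : Fin N) → Fin (J k)) → ℝ)
    (lam : ℝ) (hlam : 0 < lam)
    (T : ℕ) (A : ℕ → (n : Fin N) → Matrix (Fin (I n)) (Fin (J n)) ℝ)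
    (hstep : ∀ t < T, ∃ (n : Fin N) (r : Fin (I n)),
      A (t + 1) = Function.update (A t) n ((A t n).updateRow r
        ((Bmat I J Ω G (A t) n r + lam • (1 : Matrix (Fin (J n)) (Fin (J n)) ℝ))⁻¹.mulVec
          (cvec I J Ω X G (A t) n r)))) :
    tuckerLoss I J Ω X G (A T) lam ≤ tuckerLoss I J Ω X G (A 0) lam :=
  ptucker_update_sequence_monotone_general N I J Ω X G lam hlam T A hstep
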